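/- Let F₁, F₂ : ℝ³ → ℝ be C¹ with F_i(0,0,H) = 0 for all H and F_i(0,0,0) = 0, ∂F_i/∂w(0,0,0) = ∂F_i/∂z(0,0,0) = 0. Let (w,z,H) solve w' = λz + F₁, z' = -λw + F₂, H' = F₃ with (w(t), z(t), H(t)) → (0,0,0). Write w = R cos θ, z = R sin θ with R > 0. Then θ'(t) → -λ as t → ∞. -/

import Mathlib

/-!
Since `Fᵢ` vanishes on the `H`-axis and its `(w, z)`-derivative vanishes at the origin, the mean
value inequality in the `(w, z)`-variables together with continuity of the derivative gives
`Fᵢ(w, z, H) = o(‖(w, z)‖) = o(R)` as `(w, z, H) → 0`. Hence the perturbation term of `θ'`,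
whose numerator is bounded by `|F₁| + |F₂|`, tends to `0`.
-/

open Filter Topology Asymptotics Metric

section

variable {E F G : Type*} [NormedAddCommGroup E] [NormedSpace ℝ E] [NormedAddCommGroup F]
  [NormedSpace ℝ F] [NormedAddCommGroup G] [NormedSpace ℝ G]

theorem isLittleO_fst_of_eq_zero_of_fderiv_inl_eq_zero {f : E × F → G}
    (hf : ContDiffAt ℝ 1 f 0) (hf0 : ∀ y, f (0, y) = 0)
    (hdf : (fderiv ℝ f 0).comp (ContinuousLinearMap.inl ℝ E F) = 0) :
    f =o[𝓝 0] Prod.fst := by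
  obtain ⟨f', u, hu, hf'c, hf'⟩ := contDiffAt_one_iff.mp hf
  set L := ContinuousLinearMap.inl ℝ E F
  have hpart : Tendsto (fun p => (f' p).comp L) (𝓝 0) (𝓝 0) := by
    have hf'0 : f' 0 = fderiv ℝ f 0 := (hf' 0 (mem_of_mem_nhds hu)).fderiv.symm
    have := ((ContinuousLinearMap.compL ℝ E (E × F) G).flip L).continuous.continuousAt.tendsto.comp
      (hf'c.continuousAt hu)
    simpa [Function.comp_def, hf'0, hdf] using this
  refine isLittleO_iff.2 fun ε hε => ?_
  obtain ⟨δ, hδ, hball⟩ := eventually_nhds_iff_ball.1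
    ((hpart.eventually (eventually_norm_sub_lt 0 hε)).and hu)
  filter_upwards [ball_mem_nhds 0 hδ] with ⟨x, y⟩ hp
  have hseg : ∀ x' ∈ closedBall (0 : E) ‖x‖, (x', y) ∈ ball 0 δ := fun x' hx' => by
    rw [mem_ball_zero_iff, Prod.norm_mk] at hp ⊢
    rw [mem_closedBall_zero_iff] at hx'
    exact (max_le_max_right _ hx').trans_lt hp
  have := (convex_closedBall (0 : E) ‖x‖).norm_image_sub_le_of_norm_hasFDerivWithin_le
    (f := fun x' => f (x', y)) (f' := fun x' => (f' (x', y)).comp L)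
    (fun x' hx' => ((hf' _ (hball _ (hseg x' hx')).2).comp x'
      (hasFDerivAt_prodMk_left x' y)).hasFDerivWithinAt)
    (fun x' hx' => by simpa using (hball _ (hseg x' hx')).1.le)
    (x := 0) (y := x) (mem_closedBall_self (norm_nonneg _)) (by simp)
  simpa [hf0] using this

end

theorem isLittleO_fst_of_vanishing_on_axis (F : ℝ → ℝ → ℝ → ℝ)
    (hC : ContDiff ℝ 1 (fun p : ℝ × ℝ × ℝ => F p.1 p.2.1 p.2.2))
    (h0 : ∀ h, F 0 0 h = 0)
    (hd : fderiv ℝ (fun p : ℝ × ℝ × ℝ => F p.1 p.2.1 p.2.2) (0, 0, 0) (1, 0, 0) = 0 ∧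
      fderiv ℝ (fun p : ℝ × ℝ × ℝ => F p.1 p.2.1 p.2.2) (0, 0, 0) (0, 1, 0) = 0) :
    (fun p : (ℝ × ℝ) × ℝ => F p.1.1 p.1.2 p.2) =o[𝓝 0] Prod.fst := by
  set e := ContinuousLinearEquiv.prodAssoc ℝ ℝ ℝ ℝ
  set G := fun p : ℝ × ℝ × ℝ => F p.1 p.2.1 p.2.2
  change (G ∘ e) =o[𝓝 0] Prod.fst
  refine isLittleO_fst_of_eq_zero_of_fderiv_inl_eq_zero (hC.comp e.contDiff).contDiffAt
    (fun y => h0 _) ?_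
  refine ContinuousLinearMap.ext fun ⟨a, b⟩ => ?_
  have hab : ((a, b, 0) : ℝ × ℝ × ℝ) = a • (1, 0, 0) + b • (0, 1, 0) := by simp
  simp only [e.comp_right_fderiv]
  change fderiv ℝ G 0 (a, b, 0) = 0
  rw [hab, map_add, map_smul, map_smul]
  simp [Prod.zero_eq_mk, hd.1, hd.2]

theorem isBigO_mul_of_norm_le_one {α : Type*} {l : Filter α} (f g : α → ℝ)
    (hg : ∀ x, ‖g x‖ ≤ 1) : (fun x => f x * g x) =O[l] f :=
  IsBigO.of_bound' <| .of_forall fun x => by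
    rw [norm_mul]
    exact mul_le_of_le_one_right (norm_nonneg _) (hg x)

theorem norm_polar_le {r : ℝ} (hr : 0 ≤ r) (θ : ℝ) :
    ‖(r * Real.cos θ, r * Real.sin θ)‖ ≤ r := by
  rw [Prod.norm_mk, norm_mul, norm_mul, Real.norm_of_nonneg hr]
  exact max_le (mul_le_of_le_one_right hr (Real.abs_cos_le_one θ))
    (mul_le_of_le_one_right hr (Real.abs_sin_le_one θ))

theorem stmt_17_general (lam : ℝ)
    (F₁ F₂ : ℝ → ℝ → ℝ → ℝ)
    (hF₁C : ContDiff ℝ 1 (fun p : ℝ × ℝ × ℝ => F₁ p.1 p.2.1 p.2.2))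
    (hF₂C : ContDiff ℝ 1 (fun p : ℝ × ℝ × ℝ => F₂ p.1 p.2.1 p.2.2))
    (hF₁0 : ∀ h : ℝ, F₁ 0 0 h = 0) (hF₂0 : ∀ h : ℝ, F₂ 0 0 h = 0)
    (hdF₁ : fderiv ℝ (fun p : ℝ × ℝ × ℝ => F₁ p.1 p.2.1 p.2.2) (0, 0, 0) (1, 0, 0) = 0 ∧
            fderiv ℝ (fun p : ℝ × ℝ × ℝ => F₁ p.1 p.2.1 p.2.2) (0, 0, 0) (0, 1, 0) = 0)
    (hdF₂ : fderiv ℝ (fun p : ℝ × ℝ × ℝ => F₂ p.1 p.2.1 p.2.2) (0, 0, 0) (1, 0, 0) = 0 ∧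
            fderiv ℝ (fun p : ℝ × ℝ × ℝ => F₂ p.1 p.2.1 p.2.2) (0, 0, 0) (0, 1, 0) = 0)
    (w z H R θ : ℝ → ℝ)
    (hwlim : Filter.Tendsto w Filter.atTop (nhds 0))
    (hzlim : Filter.Tendsto z Filter.atTop (nhds 0))
    (hHlim : Filter.Tendsto H Filter.atTop (nhds 0))
    (hRpos : ∀ t, 0 < R t)
    (hpolar : ∀ t, w t = R t * Real.cos (θ t) ∧ z t = R t * Real.sin (θ t))
    (hθ : ∀ t, HasDerivAt θ
      (-lam + (F₂ (w t) (z t) (H t) * Real.cos (θ t)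
              - F₁ (w t) (z t) (H t) * Real.sin (θ t)) / R t) t) :
    Filter.Tendsto (deriv θ) Filter.atTop (nhds (-lam)) := by
  have hlim : Tendsto (fun t => ((w t, z t), H t)) atTop (𝓝 0) :=
    (hwlim.prodMk_nhds hzlim).prodMk_nhds hHlim
  have hwzR : (fun t => (w t, z t)) =O[atTop] R := IsBigO.of_bound' <| .of_forall fun t => by
    rw [(hpolar t).1, (hpolar t).2, Real.norm_of_nonneg (hRpos t).le]
    exact norm_polar_le (hRpos t).le _
  have hF₁R : (fun t => F₁ (w t) (z t) (H t)) =o[atTop] R :=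
    ((isLittleO_fst_of_vanishing_on_axis F₁ hF₁C hF₁0 hdF₁).comp_tendsto hlim).trans_isBigO hwzR
  have hF₂R : (fun t => F₂ (w t) (z t) (H t)) =o[atTop] R :=
    ((isLittleO_fst_of_vanishing_on_axis F₂ hF₂C hF₂0 hdF₂).comp_tendsto hlim).trans_isBigO hwzR
  have hnum : (fun t => F₂ (w t) (z t) (H t) * Real.cos (θ t)
      - F₁ (w t) (z t) (H t) * Real.sin (θ t)) =o[atTop] R :=
    ((isBigO_mul_of_norm_le_one _ _ fun t => Real.abs_cos_le_one (θ t)).trans_isLittleO hF₂R).sub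
      ((isBigO_mul_of_norm_le_one _ _ fun t => Real.abs_sin_le_one (θ t)).trans_isLittleO hF₁R)
  rw [funext fun t => (hθ t).deriv]
  simpa using hnum.tendsto_div_nhds_zero.const_add (-lam)

/-- If the perturbations Fᵢ vanish on the axis w = z = 0 and have vanishing
(w,z)-derivatives at the origin, then along a solution converging to the
origin the polar angle satisfies θ'(t) → -λ. -/
theorem stmt_17 (lam : ℝ) (hlam : lam ≠ 0)
    (F₁ F₂ F₃ : ℝ → ℝ → ℝ → ℝ)
    (hF₁C : ContDiff ℝ 1 (fun p : ℝ × ℝ × ℝ => F₁ p.1 p.2.1 p.2.2))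
    (hF₂C : ContDiff ℝ 1 (fun p : ℝ × ℝ × ℝ => F₂ p.1 p.2.1 p.2.2))
    (hF₁0 : ∀ h : ℝ, F₁ 0 0 h = 0) (hF₂0 : ∀ h : ℝ, F₂ 0 0 h = 0)
    (hdF₁ : fderiv ℝ (fun p : ℝ × ℝ × ℝ => F₁ p.1 p.2.1 p.2.2) (0, 0, 0) (1, 0, 0) = 0 ∧
            fderiv ℝ (fun p : ℝ × ℝ × ℝ => F₁ p.1 p.2.1 p.2.2) (0, 0, 0) (0, 1, 0) = 0)
    (hdF₂ : fderiv ℝ (fun p : ℝ × ℝ × ℝ => F₂ p.1 p.2.1 p.2.2) (0, 0, 0) (1, 0, 0) = 0 ∧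
            fderiv ℝ (fun p : ℝ × ℝ × ℝ => F₂ p.1 p.2.1 p.2.2) (0, 0, 0) (0, 1, 0) = 0)
    (w z H R θ : ℝ → ℝ)
    (hw : ∀ t, HasDerivAt w (lam * z t + F₁ (w t) (z t) (H t)) t)
    (hz : ∀ t, HasDerivAt z (-lam * w t + F₂ (w t) (z t) (H t)) t)
    (hH : ∀ t, HasDerivAt H (F₃ (w t) (z t) (H t)) t)
    (hwlim : Filter.Tendsto w Filter.atTop (nhds 0))
    (hzlim : Filter.Tendsto z Filter.atTop (nhds 0))
    (hHlim : Filter.Tendsto H Filter.atTop (nhds 0))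
    (hRpos : ∀ t, 0 < R t)
    (hpolar : ∀ t, w t = R t * Real.cos (θ t) ∧ z t = R t * Real.sin (θ t))
    (hθ : ∀ t, HasDerivAt θ
      (-lam + (F₂ (w t) (z t) (H t) * Real.cos (θ t)
              - F₁ (w t) (z t) (H t) * Real.sin (θ t)) / R t) t) :
    Filter.Tendsto (deriv θ) Filter.atTop (nhds (-lam)) :=
  stmt_17_general lam F₁ F₂ hF₁C hF₂C hF₁0 hF₂0 hdF₁ hdF₂ w z H R θ hwlim hzlim hHlim hRpos hpolar
    hθ
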